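/- arXiv:2208.04159 — 4 statements merged into one kernel-verified Lean document; each statement's English description precedes it below -/
import Mathlib

section
/- Let F be a finite field with |F| ≥ 7 and let η₀,…,η₆ be 7 distinct elements of F. Then one can choose 6 distinct elements λ₀,…,λ₅ from {η₀,…,η₆} such that (λ₁−λ₃)(λ₁−λ₅)(λ₂−λ₀)(λ₂−λ₄) ≠ (λ₂−λ₃)(λ₂−λ₅)(λ₁−λ₀)(λ₁−λ₄). -/
/-!
Take `λ₁ = η₀`, `λ₂ = η₁` and fix `λ₀, λ₃, λ₄` among `η₂, η₃, η₄`. The equality to be avoided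
then reads `A (η₀ - λ₅) = B (η₁ - λ₅)` with `A ≠ 0`, an affine equation in `λ₅` which is not
identically satisfied (else `A = B` and `A (η₀ - η₁) = 0`). So it fails for one of the two
remaining candidates `λ₅ ∈ {η₅, η₆}`.
-/

theorem mul_sub_ne_or_mul_sub_ne {R : Type*} [CommRing R] [IsDomain R] {A B a b x y : R}
    (hA : A ≠ 0) (hab : a ≠ b) (hxy : x ≠ y) :
    A * (a - x) ≠ B * (b - x) ∨ A * (a - y) ≠ B * (b - y) := by
  by_contra! h
  obtain ⟨hx, hy⟩ := h
  have hAB : A = B := by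
    have : (A - B) * (x - y) = 0 := by linear_combination hy - hx
    simpa [sub_eq_zero, hxy] using this
  subst hAB
  have : A * (a - b) = 0 := by linear_combination hx
  simp [hA, sub_eq_zero, hab] at this

theorem stmt_0_general (F : Type*) [Field F]
    (η : Fin 7 → F) (hη : Function.Injective η) :
    ∃ lam : Fin 6 → F, Function.Injective lam ∧ (∀ i, lam i ∈ Set.range η) ∧
      (lam 1 - lam 3) * (lam 1 - lam 5) * ((lam 2 - lam 0) * (lam 2 - lam 4)) ≠
      (lam 2 - lam 3) * (lam 2 - lam 5) * ((lam 1 - lam 0) * (lam 1 - lam 4)) := by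
  have hne {i j : Fin 7} (h : i ≠ j) : η i ≠ η j := hη.ne h
  have hA : (η 0 - η 2) * ((η 1 - η 3) * (η 1 - η 4)) ≠ 0 := by
    simp only [ne_eq, mul_eq_zero, sub_eq_zero, not_or]
    exact ⟨hne (by decide), hne (by decide), hne (by decide)⟩
  have hl : ∃ l : Fin 7, (l = 5 ∨ l = 6) ∧
      (η 0 - η 2) * ((η 1 - η 3) * (η 1 - η 4)) * (η 0 - η l) ≠
      (η 1 - η 2) * ((η 0 - η 3) * (η 0 - η 4)) * (η 1 - η l) := by
    rcases mul_sub_ne_or_mul_sub_ne (B := (η 1 - η 2) * ((η 0 - η 3) * (η 0 - η 4))) hA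
        (hne (by decide : (0 : Fin 7) ≠ 1)) (hne (by decide : (5 : Fin 7) ≠ 6)) with h | h
    exacts [⟨5, .inl rfl, h⟩, ⟨6, .inr rfl, h⟩]
  obtain ⟨l, hl56, hl⟩ := hl
  refine ⟨η ∘ ![3, 0, 1, 2, 4, l], hη.comp ?_, fun _ => ⟨_, rfl⟩, fun h => hl ?_⟩
  · rcases hl56 with rfl | rfl <;> decide
  · simp only [Function.comp_apply, Matrix.cons_val] at h
    linear_combination h

theorem stmt_0 (F : Type*) [Field F] [Fintype F] (hF : 7 ≤ Fintype.card F)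
    (η : Fin 7 → F) (hη : Function.Injective η) :
    ∃ lam : Fin 6 → F, Function.Injective lam ∧ (∀ i, lam i ∈ Set.range η) ∧
      (lam 1 - lam 3) * (lam 1 - lam 5) * ((lam 2 - lam 0) * (lam 2 - lam 4)) ≠
      (lam 2 - lam 3) * (lam 2 - lam 5) * ((lam 1 - lam 0) * (lam 1 - lam 4)) :=
  stmt_0_general F η hη
end

section
/- Let F be a finite field with |F| ≥ 2n+1 where 3 divides n. Then there exist 2n distinct elements λ₀,λ₁,…,λ_{2n−1} of F such that for every i with 0 ≤ i ≤ n/3−1, (λ_{6i+1}−λ_{6i+3})(λ_{6i+1}−λ_{6i+5})(λ_{6i+2}−λ_{6i})(λ_{6i+2}−λ_{6i+4}) ≠ (λ_{6i+2}−λ_{6i+3})(λ_{6i+2}−λ_{6i+5})(λ_{6i+1}−λ_{6i})(λ_{6i+1}−λ_{6i+4}). -/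
/-!
The blocks `λ_{6i}, …, λ_{6i+5} = e, a, b, c, f, d` are chosen greedily, each avoiding the elements
already used. Writing `p x = (x - c) * (x - d)` and `q x = (x - e) * (x - f)` for fresh distinct
`c, d, e, f`, and picking a fresh `a`, the bad choices of `b` are the roots of
`p a * q X - q a * p X`. This quadratic is nonzero (its value at `c` is `p a * q c ≠ 0`) and has `a`
as a root, so a new block exists as long as seven unused elements remain; before the last block
`2 * n - 6` elements are used.
-/

open Finset Polynomial

theorem List.Nodup.injOn_getD {α : Type*} {l : List α} (hl : l.Nodup) (x : α) :
    Set.InjOn (fun m => l.getD m x) (Set.Iio l.length) := by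
  intro i hi j hj hij
  simp only [Set.mem_Iio] at hi hj
  dsimp only at hij
  rwa [List.getD_eq_getElem _ _ hi, List.getD_eq_getElem _ _ hj, hl.getElem_inj_iff] at hij

theorem exists_notMem_of_card_add_lt {α : Type*} [Fintype α] (s t : Finset α)
    (h : #s + #t < Fintype.card α) : ∃ x, x ∉ s ∧ x ∉ t := by
  classical
  obtain ⟨x, -, hx⟩ := exists_mem_notMem_of_card_lt_card (s := s ∪ t) (t := univ)
    ((card_union_le s t).trans_lt (by simpa using h))
  exact ⟨x, by simpa [not_or] using hx⟩

section

variable {F : Type*} [Field F]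

theorem card_filter_mul_eq_le_two [Fintype F] [DecidableEq F] {a c d e f : F}
    (hac : a ≠ c) (had : a ≠ d) (hce : c ≠ e) (hcf : c ≠ f) :
    #{b | (a - c) * (a - d) * ((b - e) * (b - f)) = (b - c) * (b - d) * ((a - e) * (a - f))}
      ≤ 2 := by
  set R : F[X] := C ((a - c) * (a - d)) * ((X - C e) * (X - C f)) -
    C ((a - e) * (a - f)) * ((X - C c) * (X - C d))
  have hR : R ≠ 0 := by
    intro h
    have := congr_arg (eval c) h
    simp [R, sub_ne_zero.2 hac, sub_ne_zero.2 had, sub_ne_zero.2 hce, sub_ne_zero.2 hcf] at this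
  calc _ ≤ #R.roots.toFinset := by
        refine card_le_card fun b hb => ?_
        simp only [mem_filter, mem_univ, true_and] at hb
        simp only [Multiset.mem_toFinset, mem_roots hR, IsRoot, R, eval_sub, eval_mul, eval_C,
          eval_X]
        linear_combination hb
    _ ≤ R.natDegree := (Multiset.toFinset_card_le _).trans (card_roots' R)
    _ ≤ 2 := by unfold R; compute_degree

/-- `γ_{6i+1} ≠ γ_{6i+2}` for the `i`-th block of six entries of `l`, with denominators cleared. -/
def BlockSeparated (l : List F) (i : ℕ) : Prop :=
  let x j := l.getD (6 * i + j) 0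
  (x 1 - x 3) * (x 1 - x 5) * ((x 2 - x 0) * (x 2 - x 4)) ≠
    (x 2 - x 3) * (x 2 - x 5) * ((x 1 - x 0) * (x 1 - x 4))

theorem exists_fresh_separated_block [Fintype F] (s : Finset F) (hs : #s + 7 ≤ Fintype.card F) :
    ∃ blk : List F, blk.length = 6 ∧ blk.Nodup ∧ (∀ x ∈ blk, x ∉ s) ∧ BlockSeparated blk 0 := by
  classical
  obtain ⟨c, hcs, -⟩ := exists_notMem_of_card_add_lt s ∅ (by simp; omega)
  obtain ⟨d, hds, hd⟩ := exists_notMem_of_card_add_lt s {c} (by simp; omega)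
  obtain ⟨e, hes, he⟩ := exists_notMem_of_card_add_lt s {c, d}
    (by have := card_le_two (a := c) (b := d); omega)
  obtain ⟨f, hfs, hf⟩ := exists_notMem_of_card_add_lt s {c, d, e}
    (by have := card_le_three (a := c) (b := d) (c := e); omega)
  obtain ⟨a, has, ha⟩ := exists_notMem_of_card_add_lt s {c, d, e, f}
    (by have := card_le_four (a := c) (b := d) (c := e) (d := f); omega)
  simp only [mem_insert, mem_singleton, not_or] at hd he hf ha
  set B : Finset F :=
    {b | (a - c) * (a - d) * ((b - e) * (b - f)) = (b - c) * (b - d) * ((a - e) * (a - f))}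
  obtain ⟨b, hbs, hb⟩ := exists_notMem_of_card_add_lt s ({c, d, e, f} ∪ B) (by
    have := card_union_le {c, d, e, f} B
    have := card_le_four (a := c) (b := d) (c := e) (d := f)
    have : #B ≤ 2 := card_filter_mul_eq_le_two ha.1 ha.2.1 (Ne.symm he.1) (Ne.symm hf.1)
    omega)
  simp only [B, mem_union, mem_insert, mem_singleton, mem_filter, mem_univ, true_and, not_or] at hb
  refine ⟨[e, a, b, c, f, d], rfl, ?_, ?_, ?_⟩
  · simp only [List.nodup_cons, List.mem_cons, List.not_mem_nil, or_false, not_or]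
    grind
  · simp only [List.mem_cons, List.not_mem_nil, or_false]
    rintro x (rfl | rfl | rfl | rfl | rfl | rfl) <;> assumption
  · exact hb.2

theorem blockSeparated_append_of_lt (l l' : List F) {i : ℕ} (hi : 6 * i + 5 < l.length) :
    BlockSeparated (l ++ l') i ↔ BlockSeparated l i := by
  simp (disch := omega) only [BlockSeparated, List.getD_append]

theorem blockSeparated_append_length (l l' : List F) {k : ℕ} (hk : l.length = 6 * k) :
    BlockSeparated (l ++ l') k ↔ BlockSeparated l' 0 := by
  simp (disch := omega) only [BlockSeparated, List.getD_append_right, hk, Nat.add_sub_cancel_left,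
    mul_zero, zero_add]

theorem exists_nodup_separated_list [Fintype F] (k : ℕ) (hk : 6 * k + 1 ≤ Fintype.card F) :
    ∃ l : List F, l.length = 6 * k ∧ l.Nodup ∧ ∀ i < k, BlockSeparated l i := by
  classical
  induction k with
  | zero => exact ⟨[], rfl, List.nodup_nil, by simp⟩
  | succ k ih =>
    obtain ⟨l, hlen, hnodup, hsep⟩ := ih (by omega)
    obtain ⟨blk, hblen, hbnodup, hfresh, hbsep⟩ :=
      exists_fresh_separated_block l.toFinset (by have := l.toFinset_card_le; omega)
    refine ⟨l ++ blk, by simp [hlen, hblen]; ring, ?_, fun i hi => ?_⟩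
    · exact List.nodup_append.2 ⟨hnodup, hbnodup, fun x hx y hy hxy =>
        hfresh y hy (hxy ▸ List.mem_toFinset.2 hx)⟩
    · rcases Nat.lt_succ_iff_lt_or_eq.1 hi with hi | rfl
      · exact (blockSeparated_append_of_lt l blk (by omega)).2 (hsep i hi)
      · exact (blockSeparated_append_length l blk hlen).2 hbsep

end

theorem stmt_1 (F : Type*) [Field F] [Fintype F] (n : ℕ) (hn : 3 ∣ n)
    (hF : 2 * n + 1 ≤ Fintype.card F) :
    ∃ lam : ℕ → F, Set.InjOn lam (Set.Iio (2 * n)) ∧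
      ∀ i < n / 3,
        (lam (6*i+1) - lam (6*i+3)) * (lam (6*i+1) - lam (6*i+5)) *
          ((lam (6*i+2) - lam (6*i)) * (lam (6*i+2) - lam (6*i+4))) ≠
        (lam (6*i+2) - lam (6*i+3)) * (lam (6*i+2) - lam (6*i+5)) *
          ((lam (6*i+1) - lam (6*i)) * (lam (6*i+1) - lam (6*i+4))) := by
  obtain ⟨l, hlen, hnodup, hsep⟩ := exists_nodup_separated_list (F := F) (n / 3) (by omega)
  have hlen' : l.length = 2 * n := by omega
  exact ⟨fun m => l.getD m 0, hlen' ▸ hnodup.injOn_getD 0, hsep⟩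
end

section
/- Let F be a field with at least 13 elements and let λ₀,…,λ₁₁ be distinct elements of F satisfying the condition γ₁ ≠ γ₂ and γ₇ ≠ γ₈ of the paper's construction (equation (4)) for the two groups. Consider the (6,2) array code over F with subpacketization ℓ = 4 defined by parity-check block matrices A₀,…,A₅ as in equation (6) of the paper with n = 6, r = 4. Then the 16×16 matrix M = [A₀⁽⁴⁾ A₁⁽⁴⁾ A₃⁽⁴⁾ A₅⁽⁴⁾] corresponding to failed nodes {0,1,3,5} is invertible, where Aᵢ⁽⁴⁾ denotes the full 4-block-row parity-check component of node i. -/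
/-- The parity-check block `A_m(a,b)(t)` of the paper's construction (equation (6)):
nodes are grouped in threes (group `i = m / 3`), `a_i` denotes the `i`-th binary digit of
`a`, and `L_j = (1, λ_j, λ_j², …)ᵀ`.  The condition "`a_j = b_j` for all `j ≠ i`" is
expressed as `a / 2^(i+1) = b / 2^(i+1) ∧ a % 2^i = b % 2^i`. -/
def nodeBlock {F : Type*} [Field F] (lam : ℕ → F) (m a b t : ℕ) : F :=
  let i := m / 3
  let adig := if a.testBit i then 1 else 0
  if m % 3 = 0 then
    if a = b then lam (6 * i + adig) ^ t
    else if a.testBit i = false ∧ b.testBit i = true ∧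
        a / 2 ^ (i + 1) = b / 2 ^ (i + 1) ∧ a % 2 ^ i = b % 2 ^ i then
      lam (6 * i) ^ t - lam (6 * i + 1) ^ t
    else 0
  else if m % 3 = 1 then
    if a = b then lam (6 * i + 2 + adig) ^ t
    else if a.testBit i = true ∧ b.testBit i = false ∧
        a / 2 ^ (i + 1) = b / 2 ^ (i + 1) ∧ a % 2 ^ i = b % 2 ^ i then
      lam (6 * i + 3) ^ t - lam (6 * i + 2) ^ t
    else 0
  else
    if a = b then lam (6 * i + 4 + adig) ^ t else 0

namespace RegenAux

/-- Determinant of a submatrix along two (possibly different) equivalences. -/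
theorem det_sub_ee {R : Type*} [CommRing R] {n m : Type*} [DecidableEq n] [Fintype n]
    [DecidableEq m] [Fintype m] (N : Matrix m m R) (e f : n ≃ m) :
    (N.submatrix e f).det = (Equiv.Perm.sign (f.trans e.symm) : ℤ) * N.det := by
  have h : (N.submatrix ⇑e ⇑f) = (N.submatrix ⇑e ⇑e).submatrix id ⇑(f.trans e.symm) := by
    ext i j; simp
  rw [h, Matrix.det_permute', Matrix.det_submatrix_equiv_self]

theorem cv8_0 {α : Type*} (x : α) (u : Fin 7 → α) : Matrix.vecCons x u (0 : Fin 8) = x := rfl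
theorem cv8_1 {α : Type*} (x : α) (u : Fin 7 → α) : Matrix.vecCons x u (1 : Fin 8) = u 0 := rfl
theorem cv8_2 {α : Type*} (x : α) (u : Fin 7 → α) : Matrix.vecCons x u (2 : Fin 8) = u 1 := rfl
theorem cv8_3 {α : Type*} (x : α) (u : Fin 7 → α) : Matrix.vecCons x u (3 : Fin 8) = u 2 := rfl
theorem cv8_4 {α : Type*} (x : α) (u : Fin 7 → α) : Matrix.vecCons x u (4 : Fin 8) = u 3 := rfl
theorem cv8_5 {α : Type*} (x : α) (u : Fin 7 → α) : Matrix.vecCons x u (5 : Fin 8) = u 4 := rfl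
theorem cv8_6 {α : Type*} (x : α) (u : Fin 7 → α) : Matrix.vecCons x u (6 : Fin 8) = u 5 := rfl
theorem cv8_7 {α : Type*} (x : α) (u : Fin 7 → α) : Matrix.vecCons x u (7 : Fin 8) = u 6 := rfl
theorem cv7_0 {α : Type*} (x : α) (u : Fin 6 → α) : Matrix.vecCons x u (0 : Fin 7) = x := rfl
theorem cv7_1 {α : Type*} (x : α) (u : Fin 6 → α) : Matrix.vecCons x u (1 : Fin 7) = u 0 := rfl
theorem cv7_2 {α : Type*} (x : α) (u : Fin 6 → α) : Matrix.vecCons x u (2 : Fin 7) = u 1 := rfl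
theorem cv7_3 {α : Type*} (x : α) (u : Fin 6 → α) : Matrix.vecCons x u (3 : Fin 7) = u 2 := rfl
theorem cv7_4 {α : Type*} (x : α) (u : Fin 6 → α) : Matrix.vecCons x u (4 : Fin 7) = u 3 := rfl
theorem cv7_5 {α : Type*} (x : α) (u : Fin 6 → α) : Matrix.vecCons x u (5 : Fin 7) = u 4 := rfl
theorem cv7_6 {α : Type*} (x : α) (u : Fin 6 → α) : Matrix.vecCons x u (6 : Fin 7) = u 5 := rfl
theorem cv6_0 {α : Type*} (x : α) (u : Fin 5 → α) : Matrix.vecCons x u (0 : Fin 6) = x := rfl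
theorem cv6_1 {α : Type*} (x : α) (u : Fin 5 → α) : Matrix.vecCons x u (1 : Fin 6) = u 0 := rfl
theorem cv6_2 {α : Type*} (x : α) (u : Fin 5 → α) : Matrix.vecCons x u (2 : Fin 6) = u 1 := rfl
theorem cv6_3 {α : Type*} (x : α) (u : Fin 5 → α) : Matrix.vecCons x u (3 : Fin 6) = u 2 := rfl
theorem cv6_4 {α : Type*} (x : α) (u : Fin 5 → α) : Matrix.vecCons x u (4 : Fin 6) = u 3 := rfl
theorem cv6_5 {α : Type*} (x : α) (u : Fin 5 → α) : Matrix.vecCons x u (5 : Fin 6) = u 4 := rfl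
theorem cv5_0 {α : Type*} (x : α) (u : Fin 4 → α) : Matrix.vecCons x u (0 : Fin 5) = x := rfl
theorem cv5_1 {α : Type*} (x : α) (u : Fin 4 → α) : Matrix.vecCons x u (1 : Fin 5) = u 0 := rfl
theorem cv5_2 {α : Type*} (x : α) (u : Fin 4 → α) : Matrix.vecCons x u (2 : Fin 5) = u 1 := rfl
theorem cv5_3 {α : Type*} (x : α) (u : Fin 4 → α) : Matrix.vecCons x u (3 : Fin 5) = u 2 := rfl
theorem cv5_4 {α : Type*} (x : α) (u : Fin 4 → α) : Matrix.vecCons x u (4 : Fin 5) = u 3 := rfl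
theorem cv4_0 {α : Type*} (x : α) (u : Fin 3 → α) : Matrix.vecCons x u (0 : Fin 4) = x := rfl
theorem cv4_1 {α : Type*} (x : α) (u : Fin 3 → α) : Matrix.vecCons x u (1 : Fin 4) = u 0 := rfl
theorem cv4_2 {α : Type*} (x : α) (u : Fin 3 → α) : Matrix.vecCons x u (2 : Fin 4) = u 1 := rfl
theorem cv4_3 {α : Type*} (x : α) (u : Fin 3 → α) : Matrix.vecCons x u (3 : Fin 4) = u 2 := rfl
theorem cv3_0 {α : Type*} (x : α) (u : Fin 2 → α) : Matrix.vecCons x u (0 : Fin 3) = x := rfl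
theorem cv3_1 {α : Type*} (x : α) (u : Fin 2 → α) : Matrix.vecCons x u (1 : Fin 3) = u 0 := rfl
theorem cv3_2 {α : Type*} (x : α) (u : Fin 2 → α) : Matrix.vecCons x u (2 : Fin 3) = u 1 := rfl
theorem cv2_0 {α : Type*} (x : α) (u : Fin 1 → α) : Matrix.vecCons x u (0 : Fin 2) = x := rfl
theorem cv2_1 {α : Type*} (x : α) (u : Fin 1 → α) : Matrix.vecCons x u (1 : Fin 2) = u 0 := rfl

/-- The 8×8 block appearing (twice) in the decomposition of the 16×16 parity-check
submatrix. -/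
def Amat {F : Type*} [Field F] (x0 x1 x2 x3 y z : F) : Matrix (Fin 8) (Fin 8) F :=
  !![x0^0, x0^0-x1^0, x2^0, 0, y^0, 0, z^0, 0;
     x0^1, x0^1-x1^1, x2^1, 0, y^1, 0, z^1, 0;
     x0^2, x0^2-x1^2, x2^2, 0, y^2, 0, z^2, 0;
     x0^3, x0^3-x1^3, x2^3, 0, y^3, 0, z^3, 0;
     0, x1^0, x3^0-x2^0, x3^0, 0, y^0, 0, z^0;
     0, x1^1, x3^1-x2^1, x3^1, 0, y^1, 0, z^1;
     0, x1^2, x3^2-x2^2, x3^2, 0, y^2, 0, z^2;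
     0, x1^3, x3^3-x2^3, x3^3, 0, y^3, 0, z^3]

/-- The off-diagonal 8×8 block. -/
def Bmat {F : Type*} [Field F] (p q : F) : Matrix (Fin 8) (Fin 8) F :=
  !![0,0,0,0, p^0-q^0, 0, 0, 0;
     0,0,0,0, p^1-q^1, 0, 0, 0;
     0,0,0,0, p^2-q^2, 0, 0, 0;
     0,0,0,0, p^3-q^3, 0, 0, 0;
     0,0,0,0, 0, p^0-q^0, 0, 0;
     0,0,0,0, 0, p^1-q^1, 0, 0;
     0,0,0,0, 0, p^2-q^2, 0, 0;
     0,0,0,0, 0, p^3-q^3, 0, 0]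

/-- Top part of column 1 of `Amat`. -/
def u1v {F : Type*} [Field F] (x0 x1 : F) : Fin 8 → F :=
  ![x0^0-x1^0, x0^1-x1^1, x0^2-x1^2, x0^3-x1^3, 0,0,0,0]
/-- Bottom part of column 1 of `Amat`. -/
def w1v {F : Type*} [Field F] (x1 : F) : Fin 8 → F :=
  ![0,0,0,0, x1^0, x1^1, x1^2, x1^3]
/-- Top part of column 2 of `Amat`. -/
def u2v {F : Type*} [Field F] (x2 : F) : Fin 8 → F :=
  ![x2^0, x2^1, x2^2, x2^3, 0,0,0,0]
/-- Bottom part of column 2 of `Amat`. -/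
def w2v {F : Type*} [Field F] (x2 x3 : F) : Fin 8 → F :=
  ![0,0,0,0, x3^0-x2^0, x3^1-x2^1, x3^2-x2^2, x3^3-x2^3]

def eSplit : Fin 8 ≃ (Fin 4 ⊕ Fin 4) :=
  ⟨![.inl 0, .inl 1, .inl 2, .inl 3, .inr 0, .inr 1, .inr 2, .inr 3],
   Sum.elim ![0,1,2,3] ![4,5,6,7], by decide, by decide⟩

def f1 : Fin 8 ≃ (Fin 4 ⊕ Fin 4) :=
  ⟨![.inl 0, .inl 1, .inl 2, .inr 0, .inl 3, .inr 1, .inr 2, .inr 3],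
   Sum.elim ![0,1,2,4] ![3,5,6,7], by decide, by decide⟩

def f2 : Fin 8 ≃ (Fin 4 ⊕ Fin 4) :=
  ⟨![.inl 0, .inl 1, .inr 0, .inr 1, .inl 2, .inr 2, .inl 3, .inr 3],
   Sum.elim ![0,1,4,6] ![2,3,5,7], by decide, by decide⟩

def f3 : Fin 8 ≃ (Fin 4 ⊕ Fin 4) :=
  ⟨![.inl 0, .inr 0, .inl 1, .inr 1, .inl 2, .inr 2, .inl 3, .inr 3],
   Sum.elim ![0,2,4,6] ![1,3,5,7], by decide, by decide⟩

def f4 : Fin 8 ≃ (Fin 4 ⊕ Fin 4) :=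
  ⟨![.inl 0, .inr 0, .inr 1, .inr 2, .inl 1, .inr 3, .inl 2, .inl 3],
   Sum.elim ![0,4,6,7] ![1,2,3,5], by decide, by decide⟩

section Det8

variable {F : Type*} [Field F] (x0 x1 x2 x3 y z : F)

theorem t1det : (((Amat x0 x1 x2 x3 y z).updateCol 1 (u1v x0 x1)).updateCol 2
    (u2v x2)).det = 0 := by
  have key : ((Amat x0 x1 x2 x3 y z).updateCol 1 (u1v x0 x1)).updateCol 2 (u2v x2) =
      (Matrix.fromBlocks
        !![x0^0, x0^0-x1^0, x2^0, y^0; x0^1, x0^1-x1^1, x2^1, y^1;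
           x0^2, x0^2-x1^2, x2^2, y^2; x0^3, x0^3-x1^3, x2^3, y^3]
        !![0,0,z^0,0; 0,0,z^1,0; 0,0,z^2,0; 0,0,z^3,0]
        0
        !![x3^0, y^0, 0, z^0; x3^1, y^1, 0, z^1;
           x3^2, y^2, 0, z^2; x3^3, y^3, 0, z^3]).submatrix eSplit f1 := by
    ext i j; fin_cases i <;> fin_cases j <;> rfl
  rw [key, det_sub_ee, Matrix.det_fromBlocks_zero₂₁]
  have hs : ((Equiv.Perm.sign (f1.trans eSplit.symm) : ℤ)) = -1 := by decide
  rw [hs]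
  simp [Matrix.det_succ_row_zero, Fin.sum_univ_succ, Fin.succAbove, Fin.castSucc,
    Fin.castAdd, Fin.castLE]
  try ring

theorem t2det : (((Amat x0 x1 x2 x3 y z).updateCol 1 (u1v x0 x1)).updateCol 2
    (w2v x2 x3)).det =
    -(((x1-x0)*(y-x0)*(z-x0)*(y-x1)*(z-x1)*(z-y)) *
      ((x3-x2)*(y-x2)*(z-x2)*(y-x3)*(z-x3)*(z-y))) := by
  have key : ((Amat x0 x1 x2 x3 y z).updateCol 1 (u1v x0 x1)).updateCol 2 (w2v x2 x3) =
      (Matrix.fromBlocks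
        !![x0^0, x0^0-x1^0, y^0, z^0; x0^1, x0^1-x1^1, y^1, z^1;
           x0^2, x0^2-x1^2, y^2, z^2; x0^3, x0^3-x1^3, y^3, z^3]
        0
        0
        !![x3^0-x2^0, x3^0, y^0, z^0; x3^1-x2^1, x3^1, y^1, z^1;
           x3^2-x2^2, x3^2, y^2, z^2; x3^3-x2^3, x3^3, y^3, z^3]).submatrix eSplit f2 := by
    ext i j; fin_cases i <;> fin_cases j <;> rfl
  rw [key, det_sub_ee, Matrix.det_fromBlocks_zero₂₁]
  have hs : ((Equiv.Perm.sign (f2.trans eSplit.symm) : ℤ)) = -1 := by decide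
  rw [hs]
  simp [Matrix.det_succ_row_zero, Fin.sum_univ_succ, Fin.succAbove, Fin.castSucc,
    Fin.castAdd, Fin.castLE]
  try ring

theorem t3det : (((Amat x0 x1 x2 x3 y z).updateCol 1 (w1v x1)).updateCol 2
    (u2v x2)).det =
    ((x2-x0)*(y-x0)*(z-x0)*(y-x2)*(z-x2)*(z-y)) *
      ((x3-x1)*(y-x1)*(z-x1)*(y-x3)*(z-x3)*(z-y)) := by
  have key : ((Amat x0 x1 x2 x3 y z).updateCol 1 (w1v x1)).updateCol 2 (u2v x2) =
      (Matrix.fromBlocks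
        !![x0^0, x2^0, y^0, z^0; x0^1, x2^1, y^1, z^1;
           x0^2, x2^2, y^2, z^2; x0^3, x2^3, y^3, z^3]
        0
        0
        !![x1^0, x3^0, y^0, z^0; x1^1, x3^1, y^1, z^1;
           x1^2, x3^2, y^2, z^2; x1^3, x3^3, y^3, z^3]).submatrix eSplit f3 := by
    ext i j; fin_cases i <;> fin_cases j <;> rfl
  rw [key, det_sub_ee, Matrix.det_fromBlocks_zero₂₁]
  have hs : ((Equiv.Perm.sign (f3.trans eSplit.symm) : ℤ)) = 1 := by decide
  rw [hs]
  simp [Matrix.det_succ_row_zero, Fin.sum_univ_succ, Fin.succAbove, Fin.castSucc,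
    Fin.castAdd, Fin.castLE]
  try ring

theorem t4det : (((Amat x0 x1 x2 x3 y z).updateCol 1 (w1v x1)).updateCol 2
    (w2v x2 x3)).det = 0 := by
  have key : ((Amat x0 x1 x2 x3 y z).updateCol 1 (w1v x1)).updateCol 2 (w2v x2 x3) =
      (Matrix.fromBlocks
        !![x0^0, y^0, z^0, 0; x0^1, y^1, z^1, 0;
           x0^2, y^2, z^2, 0; x0^3, y^3, z^3, 0]
        0
        !![0,0,0, z^0; 0,0,0, z^1; 0,0,0, z^2; 0,0,0, z^3]
        !![x1^0, x3^0-x2^0, x3^0, y^0; x1^1, x3^1-x2^1, x3^1, y^1;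
           x1^2, x3^2-x2^2, x3^2, y^2; x1^3, x3^3-x2^3, x3^3, y^3]).submatrix eSplit f4 := by
    ext i j; fin_cases i <;> fin_cases j <;> rfl
  rw [key, det_sub_ee, Matrix.det_fromBlocks_zero₁₂]
  have hs : ((Equiv.Perm.sign (f4.trans eSplit.symm) : ℤ)) = -1 := by decide
  rw [hs]
  simp [Matrix.det_succ_row_zero, Fin.sum_univ_succ, Fin.succAbove, Fin.castSucc,
    Fin.castAdd, Fin.castLE]
  try ring

theorem detAmat :
    (Amat x0 x1 x2 x3 y z).det =
      (x0-x3)*(x1-x2)*(y-z)^2*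
        ((x0-y)*(x0-z)*(x1-y)*(x1-z)*(x2-y)*(x2-z)*(x3-y)*(x3-z)) := by
  have hcol1 : (Amat x0 x1 x2 x3 y z).det =
      ((Amat x0 x1 x2 x3 y z).updateCol 1 (u1v x0 x1)).det +
      ((Amat x0 x1 x2 x3 y z).updateCol 1 (w1v x1)).det := by
    rw [← Matrix.det_updateCol_add]
    congr 1
    have h : u1v x0 x1 + w1v x1 = fun i => Amat x0 x1 x2 x3 y z i 1 := by
      funext i
      fin_cases i <;>
        simp [u1v, w1v, Amat, Pi.add_apply, cv8_0, cv8_1, cv8_2, cv8_3, cv8_4, cv8_5, cv8_6, cv8_7, cv7_0, cv7_1, cv7_2, cv7_3, cv7_4, cv7_5, cv7_6, cv6_0, cv6_1, cv6_2, cv6_3, cv6_4, cv6_5, cv5_0, cv5_1, cv5_2, cv5_3, cv5_4, cv4_0, cv4_1, cv4_2, cv4_3, cv3_0, cv3_1, cv3_2, cv2_0, cv2_1] <;> ring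
    rw [h, Matrix.updateCol_eq_self]
  have hcol2 : ∀ p : Fin 8 → F,
      ((Amat x0 x1 x2 x3 y z).updateCol 1 p).det =
        (((Amat x0 x1 x2 x3 y z).updateCol 1 p).updateCol 2 (u2v x2)).det +
        (((Amat x0 x1 x2 x3 y z).updateCol 1 p).updateCol 2 (w2v x2 x3)).det := by
    intro p
    rw [← Matrix.det_updateCol_add]
    congr 1
    have h : u2v x2 + w2v x2 x3 =
        fun i => ((Amat x0 x1 x2 x3 y z).updateCol 1 p) i 2 := by
      funext i
      fin_cases i <;>
        simp [u2v, w2v, Amat, Matrix.updateCol_apply, Pi.add_apply, cv8_0, cv8_1, cv8_2, cv8_3, cv8_4, cv8_5, cv8_6, cv8_7, cv7_0, cv7_1, cv7_2, cv7_3, cv7_4, cv7_5, cv7_6, cv6_0, cv6_1, cv6_2, cv6_3, cv6_4, cv6_5, cv5_0, cv5_1, cv5_2, cv5_3, cv5_4, cv4_0, cv4_1, cv4_2, cv4_3, cv3_0, cv3_1, cv3_2, cv2_0, cv2_1] <;> ring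
    rw [h, Matrix.updateCol_eq_self]
  rw [hcol1, hcol2 (u1v x0 x1), hcol2 (w1v x1), t1det, t2det, t3det, t4det]
  ring

end Det8

/-- Row reindexing for the 16×16 matrix: `(a, t) ↦ 4a + t`, split by `a < 2`. -/
def eM : (Fin 4 × Fin 4) ≃ (Fin 8 ⊕ Fin 8) where
  toFun p :=
    if h : (p.1 : ℕ) < 2 then
      Sum.inl ⟨4 * (p.1 : ℕ) + (p.2 : ℕ), by have := p.2.isLt; omega⟩
    else
      Sum.inr ⟨4 * ((p.1 : ℕ) - 2) + (p.2 : ℕ), by have := p.1.isLt; have := p.2.isLt; omega⟩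
  invFun s :=
    Sum.elim
      (fun i : Fin 8 => ((⟨(i : ℕ) / 4, by have := i.isLt; omega⟩ : Fin 4),
        (⟨(i : ℕ) % 4, by omega⟩ : Fin 4)))
      (fun i : Fin 8 => ((⟨(i : ℕ) / 4 + 2, by have := i.isLt; omega⟩ : Fin 4),
        (⟨(i : ℕ) % 4, by omega⟩ : Fin 4))) s
  left_inv := by decide
  right_inv := by decide

/-- Column reindexing for the 16×16 matrix: `(n, b) ↦ 2n + b`, split by `b < 2`. -/
def fM : (Fin 4 × Fin 4) ≃ (Fin 8 ⊕ Fin 8) where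
  toFun p :=
    if h : (p.2 : ℕ) < 2 then
      Sum.inl ⟨2 * (p.1 : ℕ) + (p.2 : ℕ), by have := p.1.isLt; omega⟩
    else
      Sum.inr ⟨2 * (p.1 : ℕ) + ((p.2 : ℕ) - 2), by have := p.1.isLt; have := p.2.isLt; omega⟩
  invFun s :=
    Sum.elim
      (fun j : Fin 8 => ((⟨(j : ℕ) / 2, by have := j.isLt; omega⟩ : Fin 4),
        (⟨(j : ℕ) % 2, by omega⟩ : Fin 4)))
      (fun j : Fin 8 => ((⟨(j : ℕ) / 2, by have := j.isLt; omega⟩ : Fin 4),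
        (⟨(j : ℕ) % 2 + 2, by omega⟩ : Fin 4))) s
  left_inv := by decide
  right_inv := by decide

end RegenAux

set_option maxHeartbeats 1000000 in
theorem stmt_15 (F : Type*) [Field F] (h13 : (13 : Cardinal) ≤ Cardinal.mk F)
    (lam : ℕ → F) (hinj : Set.InjOn lam (Set.Iio 12))
    (hcond : ∀ i < 2,
      (lam (6*i+1) - lam (6*i+3)) * (lam (6*i+1) - lam (6*i+5)) *
        ((lam (6*i+2) - lam (6*i)) * (lam (6*i+2) - lam (6*i+4))) ≠
      (lam (6*i+2) - lam (6*i+3)) * (lam (6*i+2) - lam (6*i+5)) *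
        ((lam (6*i+1) - lam (6*i)) * (lam (6*i+1) - lam (6*i+4)))) :
    let nodes : Fin 4 → ℕ := ![0, 1, 3, 5]
    let M : Matrix (Fin 4 × Fin 4) (Fin 4 × Fin 4) F := fun row col =>
      nodeBlock lam (nodes col.1) (row.1 : ℕ) (col.2 : ℕ) (row.2 : ℕ)
    IsUnit M.det := by
  intro nodes M
  have key : M = (Matrix.fromBlocks
      (RegenAux.Amat (lam 0) (lam 1) (lam 2) (lam 3) (lam 6) (lam 10))
      (RegenAux.Bmat (lam 6) (lam 7))
      0
      (RegenAux.Amat (lam 0) (lam 1) (lam 2) (lam 3) (lam 7)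
        (lam 11))).submatrix RegenAux.eM RegenAux.fM := by
    unfold M nodes
    ext ⟨i1, i2⟩ ⟨j1, j2⟩
    fin_cases i1 <;> fin_cases i2 <;> fin_cases j1 <;> fin_cases j2 <;> rfl
  have hs : ((Equiv.Perm.sign (RegenAux.fM.trans RegenAux.eM.symm) : ℤ)) = 1 := by decide
  have hne : ∀ i j : ℕ, i < 12 → j < 12 → i ≠ j → lam i - lam j ≠ 0 := by
    intro i j hi hj hij h
    exact hij (hinj (Set.mem_Iio.mpr hi) (Set.mem_Iio.mpr hj) (sub_eq_zero.mp h))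
  rw [key, RegenAux.det_sub_ee, hs, Matrix.det_fromBlocks_zero₂₁,
    RegenAux.detAmat, RegenAux.detAmat]
  refine isUnit_iff_ne_zero.mpr ?_
  simp only [Int.cast_one, one_mul]
  repeat' apply mul_ne_zero
  all_goals first
    | refine pow_ne_zero _ (hne _ _ ?_ ?_ ?_) <;> norm_num
    | refine hne _ _ ?_ ?_ ?_ <;> norm_num
end

section
/- Let F be a field, z ≥ 2, and in the setting of the Q̄ matrix, fix 0 ≤ i < j ≤ z−1. After the column operations D̄'_{2i}(b) = D̄_{2i}(b) + γ₁⁽ʲ⁾ D̄_{2i}(b + 2^{j−1}) − D̄_{2j}(φ(i,j,b)) − γ₁⁽ⁱ⁾ D̄_{2j}(φ(i,j,b) + 2^i) for every b with b_{j−1} = 0 (which preserve the determinant), every entry of each modified column D̄'_{2i}(b) is divisible by (λ₁⁽ⁱ⁾ − λ₁⁽ʲ⁾) in the polynomial ring. Consequently (λ₁⁽ⁱ⁾ − λ₁⁽ʲ⁾)^{2^{z−2}} divides det(Q̄) in ℤ[λ's, γ's]. -/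
/-- The matrix `Q̄` from the proof of Lemma 2, with the entries regarded as multivariate
polynomials over `ℤ`: the variable `((false, c), i)` is `λ₁⁽ⁱ⁾` (for `c = false`) resp.
`λ₂⁽ⁱ⁾` (for `c = true`), and `((true, c), i)` is `γ₁⁽ⁱ⁾` resp. `γ₂⁽ⁱ⁾`.
Columns are indexed by `(a', i)`, where the bit `c` of `a'` at position `i` selects the
block `D̄_{2i}` (`c = false`) or `D̄_{2i+1}` (`c = true`); the column of block `D̄_{2i}`
with (block-internal) index `b` is the column `(a(i,0,b), i)`. -/
noncomputable def Qbar (z : ℕ) :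
    Matrix (Fin (2 ^ z) × Fin z) (Fin (2 ^ z) × Fin z)
      (MvPolynomial ((Bool × Bool) × Fin z) ℤ) := fun row col =>
  let cbit := ((col.1 : ℕ)).testBit (col.2 : ℕ)
  let a0 : ℕ := (col.1 : ℕ) - (if cbit then 2 ^ (col.2 : ℕ) else 0)
  let lamv := MvPolynomial.X (R := ℤ) ((false, cbit), col.2)
  let gamv := MvPolynomial.X (R := ℤ) ((true, cbit), col.2)
  if (row.1 : ℕ) = a0 then lamv ^ (row.2 : ℕ)
  else if (row.1 : ℕ) = a0 + 2 ^ (col.2 : ℕ) then gamv * lamv ^ (row.2 : ℕ)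
  else 0

/-! Fix `i < j`. For each of the `2 ^ (z - 2)` columns `(a, i)` of `D̄_{2i}` with bit `j` of `a`
clear, add `γ₁⁽ʲ⁾ · (a + 2 ^ j, i) - (a, j) - γ₁⁽ⁱ⁾ · (a + 2 ^ i, j)` to it. The added columns are
never among the modified ones, so these operations are right multiplication by a block-unitriangular
matrix and preserve the determinant. A modified column has at most four nonzero entries, in rows
`a`, `a + 2 ^ i`, `a + 2 ^ j`, `a + 2 ^ i + 2 ^ j`, each a monomial in the `γ`s times
`(λ₁⁽ⁱ⁾) ^ t - (λ₁⁽ʲ⁾) ^ t`; so `λ₁⁽ⁱ⁾ - λ₁⁽ʲ⁾` can be pulled out of `2 ^ (z - 2)` columns. -/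

namespace Nat

def insertBit (p : ℕ) (c : Bool) (b : ℕ) : ℕ :=
  b / 2 ^ p * 2 ^ (p + 1) + (if c then 2 ^ p else 0) + b % 2 ^ p

def eraseBit (p b : ℕ) : ℕ := b / 2 ^ (p + 1) * 2 ^ p + b % 2 ^ p

theorem testBit_insertBit (p : ℕ) (c : Bool) (b k : ℕ) :
    (insertBit p c b).testBit k =
      if k < p then b.testBit k else if k = p then c else b.testBit (k - 1) := by
  have h : insertBit p c b = 2 ^ p * bit c (b / 2 ^ p) + b % 2 ^ p := by
    cases c <;>
      simp only [insertBit, bit_val, Bool.toNat_false, Bool.toNat_true, Bool.false_eq_true,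
        if_true, if_false, add_zero, pow_succ] <;> ring
  rw [h, testBit_two_pow_mul_add _ (mod_lt _ (Nat.two_pow_pos p)), testBit_mod_two_pow]
  split_ifs with hkp hk
  · simp [hkp]
  · simp [hk]
  · obtain ⟨s, hs⟩ : ∃ s, k - p = s + 1 := ⟨k - p - 1, by omega⟩
    rw [hs, testBit_bit_succ, testBit_div_two_pow]
    congr 1
    omega

theorem testBit_eraseBit (p b k : ℕ) :
    (eraseBit p b).testBit k = if k < p then b.testBit k else b.testBit (k + 1) := by
  rw [eraseBit, mul_comm, testBit_two_pow_mul_add _ (mod_lt _ (Nat.two_pow_pos p)),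
    testBit_mod_two_pow, testBit_div_two_pow]
  split_ifs with hkp
  · simp [hkp]
  · congr 1
    omega

theorem insertBit_true (p b : ℕ) : insertBit p true b = insertBit p false b + 2 ^ p := by
  simp only [insertBit, if_true, Bool.false_eq_true, if_false]
  ring

theorem eraseBit_insertBit (p : ℕ) (c : Bool) (b : ℕ) : eraseBit p (insertBit p c b) = b :=
  eq_of_testBit_eq fun k => by
    simp only [testBit_eraseBit, testBit_insertBit]
    split_ifs <;> first | rfl | omega

theorem insertBit_injective (p : ℕ) (c : Bool) : Function.Injective (insertBit p c) :=
  Function.LeftInverse.injective (eraseBit_insertBit p c)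

theorem insertBit_eraseBit {p b : ℕ} {c : Bool} (h : b.testBit p = c) :
    insertBit p c (eraseBit p b) = b :=
  eq_of_testBit_eq fun k => by
    simp only [testBit_eraseBit, testBit_insertBit]
    split_ifs <;> first | rfl | omega | (congr 1; omega) | simp_all

theorem testBit_add_two_pow {a p : ℕ} (h : a.testBit p = false) (k : ℕ) :
    (a + 2 ^ p).testBit k = if k = p then true else a.testBit k := by
  rw [← insertBit_eraseBit h, ← insertBit_true, testBit_insertBit, testBit_insertBit]
  split_ifs <;> first | rfl | omega

theorem insertBit_lt {p M b : ℕ} (hp : p ≤ M) (hb : b < 2 ^ M) (c : Bool) :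
    insertBit p c b < 2 ^ (M + 1) :=
  lt_pow_two_of_testBit _ fun k hk => by
    rw [testBit_insertBit, if_neg (by omega), if_neg (by omega)]
    exact testBit_lt_two_pow (hb.trans_le (Nat.pow_le_pow_right two_pos (by omega)))

theorem add_two_pow_lt_two_pow {b q M : ℕ} (h : b.testBit q = false) (hq : q < M)
    (hb : b < 2 ^ M) : b + 2 ^ q < 2 ^ M :=
  lt_pow_two_of_testBit _ fun k hk => by
    rw [testBit_add_two_pow h, if_neg (by omega)]
    exact testBit_lt_two_pow (hb.trans_le (Nat.pow_le_pow_right two_pos hk))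

theorem insertBit_add_two_pow_of_le {p q b : ℕ} (hpq : p ≤ q) (h : b.testBit q = false)
    (c : Bool) : insertBit p c (b + 2 ^ q) = insertBit p c b + 2 ^ (q + 1) :=
  eq_of_testBit_eq fun k => by
    have h' : (insertBit p c b).testBit (q + 1) = false := by
      rw [testBit_insertBit, if_neg (by omega), if_neg (by omega)]
      exact h
    simp only [testBit_add_two_pow h', testBit_insertBit, testBit_add_two_pow h]
    split_ifs <;> first | rfl | omega

theorem insertBit_add_two_pow_of_lt {p q x : ℕ} (hpq : p < q) (h : x.testBit p = false)
    (c : Bool) : insertBit q c (x + 2 ^ p) = insertBit q c x + 2 ^ p :=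
  eq_of_testBit_eq fun k => by
    have h' : (insertBit q c x).testBit p = false := by
      rw [testBit_insertBit, if_pos hpq]
      exact h
    simp only [testBit_add_two_pow h', testBit_insertBit, testBit_add_two_pow h]
    split_ifs <;> first | rfl | omega

theorem insertBit_succ_insertBit_eraseBit {p q b : ℕ} (hpq : p ≤ q) (h : b.testBit q = false)
    (c : Bool) : insertBit (q + 1) false (insertBit p c (eraseBit q b)) = insertBit p c b :=
  eq_of_testBit_eq fun k => by
    simp only [testBit_insertBit, testBit_eraseBit]
    split_ifs <;> first | rfl | omega | (congr 1; omega) | (subst_vars; simp [h])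

theorem testBit_insertBit_self (p : ℕ) (c : Bool) (b : ℕ) :
    (insertBit p c b).testBit p = c := by
  simp [testBit_insertBit]

theorem testBit_insertBit_of_lt {p k : ℕ} (h : p < k) (c : Bool) (b : ℕ) :
    (insertBit p c b).testBit k = b.testBit (k - 1) := by
  rw [testBit_insertBit, if_neg (by omega), if_neg (by omega)]

theorem insertBit_add_two_pow_add_two_pow_lt {p q M b : ℕ} (hpq : p < q) (hqM : q < M)
    (hb : b < 2 ^ (M - 1)) (h : b.testBit (q - 1) = false) :
    insertBit p false b + 2 ^ p + 2 ^ q < 2 ^ M := by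
  have hq : q - 1 + 1 = q := by omega
  have hM : M - 1 + 1 = M := by omega
  rw [add_right_comm, ← hq, ← insertBit_add_two_pow_of_le (by omega) h, ← insertBit_true, ← hM]
  exact insertBit_lt (by omega) (add_two_pow_lt_two_pow h (by omega) hb) true

end Nat

namespace Matrix

variable {n R : Type*} [Fintype n] [DecidableEq n] [CommRing R]

theorem pow_card_dvd_det_of_dvd_col (A : Matrix n n R) (T : Finset n) (d : R)
    (h : ∀ c ∈ T, ∀ r, d ∣ A r c) : d ^ T.card ∣ A.det := by
  choose w hw using h
  let A' : Matrix n n R := fun r c => if hc : c ∈ T then w c hc r else A r c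
  have hA : A = A' * diagonal fun c => if c ∈ T then d else 1 := by
    ext r c
    rw [mul_diagonal]
    by_cases hc : c ∈ T <;> simp [A', hc, hw c, mul_comm]
  rw [hA, det_mul, det_diagonal, Finset.prod_ite_mem, Finset.univ_inter, Finset.prod_const]
  exact dvd_mul_left _ _

theorem det_one_add_eq_one_of_apply_ne_zero (B : Matrix n n R) (T : Finset n)
    (hB : ∀ k c, B k c ≠ 0 → c ∈ T ∧ k ∉ T) : (1 + B).det = 1 := by
  have hB' : ∀ k c, (c ∈ T ↔ k ∈ T) → B k c = 0 := fun k c hkc => by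
    by_contra hne
    have := hB k c hne
    tauto
  have hblock : BlockTriangular (1 + B) fun x => decide (x ∈ T) := by
    intro k c hlt
    simp only [Bool.lt_iff, decide_eq_false_iff_not, decide_eq_true_eq] at hlt
    have hkc : B k c = 0 := by
      by_contra hne
      exact hlt.1 (hB k c hne).1
    rw [add_apply, one_apply_ne (by rintro rfl; exact hlt.1 hlt.2), hkc, add_zero]
  have hdiag : ∀ b : Bool, (1 + B).toSquareBlock (fun x => decide (x ∈ T)) b = 1 := by
    intro b
    ext ⟨k, hk⟩ ⟨c, hc⟩
    rw [toSquareBlock_def, of_apply, add_apply, hB' k c (by rw [← decide_eq_decide, hk, hc]),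
      add_zero]
    simp [one_apply]
  simp [hblock.det_fintype, hdiag]

theorem pow_card_dvd_det_of_dvd_mul_one_add (A B : Matrix n n R) (T : Finset n) (d : R)
    (hB : ∀ k c, B k c ≠ 0 → c ∈ T ∧ k ∉ T) (h : ∀ c ∈ T, ∀ r, d ∣ (A * (1 + B)) r c) :
    d ^ T.card ∣ A.det := by
  simpa [det_mul, det_one_add_eq_one_of_apply_ne_zero B T hB] using
    pow_card_dvd_det_of_dvd_col _ T d h

end Matrix

open MvPolynomial

theorem Qbar_apply_of_testBit_eq_false {z a : ℕ} (r : Fin (2 ^ z) × Fin z) (ha : a < 2 ^ z)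
    (p : Fin z) (h : a.testBit p = false) :
    Qbar z r (Fin.ofNat _ a, p) =
      if (r.1 : ℕ) = a then X ((false, false), p) ^ (r.2 : ℕ)
      else if (r.1 : ℕ) = a + 2 ^ (p : ℕ) then
        X ((true, false), p) * X ((false, false), p) ^ (r.2 : ℕ)
      else 0 := by
  simp [Qbar, Nat.mod_eq_of_lt ha, h]

theorem X_sub_X_dvd_Qbar_column_combination {z a : ℕ} {i j : Fin z} (hij : i < j)
    (hai : a.testBit i = false) (haj : a.testBit j = false)
    (ha : a + 2 ^ (i : ℕ) + 2 ^ (j : ℕ) < 2 ^ z) (r : Fin (2 ^ z) × Fin z) :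
    X ((false, false), i) - X ((false, false), j) ∣
      Qbar z r (Fin.ofNat _ a, i)
        + X ((true, false), j) * Qbar z r (Fin.ofNat _ (a + 2 ^ (j : ℕ)), i)
        - Qbar z r (Fin.ofNat _ a, j)
        - X ((true, false), i) * Qbar z r (Fin.ofNat _ (a + 2 ^ (i : ℕ)), j) := by
  have hij' : (i : ℕ) < j := hij
  have hpow : 2 ^ (i : ℕ) < 2 ^ (j : ℕ) := Nat.pow_lt_pow_right one_lt_two hij
  have hpos : 0 < 2 ^ (i : ℕ) := Nat.two_pow_pos _
  rw [Qbar_apply_of_testBit_eq_false r (by omega) i hai,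
    Qbar_apply_of_testBit_eq_false r (by omega) i
      (by rwa [Nat.testBit_add_two_pow haj, if_neg hij'.ne]),
    Qbar_apply_of_testBit_eq_false r (by omega) j haj,
    Qbar_apply_of_testBit_eq_false r (by omega) j
      (by rwa [Nat.testBit_add_two_pow hai, if_neg hij'.ne'])]
  rw [← Ideal.mem_span_singleton, ← Ideal.Quotient.eq_zero_iff_mem]
  have hX : Ideal.Quotient.mk (Ideal.span {X ((false, false), i) - X ((false, false), j)})
      (X ((false, false), i) : MvPolynomial ((Bool × Bool) × Fin z) ℤ) =
        Ideal.Quotient.mk _ (X ((false, false), j)) :=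
    Ideal.Quotient.eq.2 (Ideal.mem_span_singleton_self _)
  simp only [map_add, map_sub, map_mul, apply_ite (Ideal.Quotient.mk _), map_pow, map_zero,
    hX]
  split_ifs <;> first | omega | ring

theorem exists_finset_card_of_two_bits_clear {z : ℕ} {i j : Fin z} (hij : i < j) :
    ∃ T : Finset (Fin (2 ^ z) × Fin z), T.card = 2 ^ (z - 2) ∧
      ∀ c ∈ T, ∃ a : ℕ, c = (Fin.ofNat _ a, i) ∧ a.testBit i = false ∧ a.testBit j = false ∧
        a + 2 ^ (i : ℕ) + 2 ^ (j : ℕ) < 2 ^ z := by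
  have hij' : (i : ℕ) < j := hij
  have hjz := j.isLt
  have hb : ∀ y < 2 ^ (z - 2), Nat.insertBit (j - 1) false y < 2 ^ (z - 1) := fun y hy => by
    simpa only [show z - 2 + 1 = z - 1 by omega] using
      Nat.insertBit_lt (p := (j - 1 : ℕ)) (by omega) hy false
  have ha : ∀ y < 2 ^ (z - 2), Nat.insertBit i false (Nat.insertBit (j - 1) false y) < 2 ^ z :=
    fun y hy => by
      simpa only [show z - 1 + 1 = z by omega] using
        Nat.insertBit_lt (p := (i : ℕ)) (by omega) (hb y hy) false
  refine ⟨(Finset.range (2 ^ (z - 2))).image fun y =>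
    (Fin.ofNat _ (Nat.insertBit i false (Nat.insertBit (j - 1) false y)), i), ?_, ?_⟩
  · rw [Finset.card_image_of_injOn, Finset.card_range]
    intro y hy y' hy' h
    rw [Finset.coe_range, Set.mem_Iio] at hy hy'
    have hval := congrArg (fun c => (c.1 : ℕ)) h
    simp only [Fin.val_ofNat, Nat.mod_eq_of_lt (ha y hy), Nat.mod_eq_of_lt (ha y' hy')] at hval
    exact Nat.insertBit_injective _ _ (Nat.insertBit_injective _ _ hval)
  · simp only [Finset.mem_image, Finset.mem_range]
    rintro c ⟨y, hy, rfl⟩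
    have hbit := Nat.testBit_insertBit_self (j - 1 : ℕ) false y
    exact ⟨_, rfl, Nat.testBit_insertBit_self _ _ _,
      (Nat.testBit_insertBit_of_lt hij' _ _).trans hbit,
      Nat.insertBit_add_two_pow_add_two_pow_lt hij' hjz (hb y hy) hbit⟩

theorem X_sub_X_pow_dvd_det_Qbar {z : ℕ} {i j : Fin z} (hij : i < j) :
    (X ((false, false), i) - X ((false, false), j) : MvPolynomial ((Bool × Bool) × Fin z) ℤ) ^
      2 ^ (z - 2) ∣ (Qbar z).det := by
  obtain ⟨T, hcard, hT⟩ := exists_finset_card_of_two_bits_clear hij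
  let B : Matrix (Fin (2 ^ z) × Fin z) (Fin (2 ^ z) × Fin z)
      (MvPolynomial ((Bool × Bool) × Fin z) ℤ) := fun k c =>
    if c ∈ T then
      (if k = (Fin.ofNat _ (c.1 + 2 ^ (j : ℕ)), i) then X ((true, false), j) else 0)
        - (if k = (c.1, j) then 1 else 0)
        - (if k = (Fin.ofNat _ (c.1 + 2 ^ (i : ℕ)), j) then X ((true, false), i) else 0)
    else 0
  rw [← hcard]
  refine Matrix.pow_card_dvd_det_of_dvd_mul_one_add _ B T _
    (fun k c hkc => ?_) (fun c hc r => ?_)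
  · have hc : c ∈ T := by
      by_contra h
      simp [B, h] at hkc
    refine ⟨hc, fun hk => ?_⟩
    obtain ⟨a, rfl, -, haj, ha⟩ := hT c hc
    obtain ⟨a', rfl, -, ha'j, ha'⟩ := hT k hk
    -- of the three added columns only `(a + 2 ^ j, i)` could lie in `T`, but its bit `j` is set
    simp only [B, if_pos hc, Prod.mk.injEq, hij.ne, and_false, and_true, if_false, sub_zero,
      ite_ne_right_iff] at hkc
    have hval := congrArg Fin.val hkc.1
    have hi := Nat.two_pow_pos i
    have hj := Nat.two_pow_pos j
    simp only [Fin.val_ofNat, Nat.mod_eq_of_lt (show a < 2 ^ z by omega),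
      Nat.mod_eq_of_lt (show a' < 2 ^ z by omega),
      Nat.mod_eq_of_lt (show a + 2 ^ (j : ℕ) < 2 ^ z by omega)] at hval
    rw [hval, Nat.testBit_add_two_pow haj, if_pos rfl] at ha'j
    simp at ha'j
  · obtain ⟨a, rfl, hai, haj, ha⟩ := hT c hc
    have ha' : a < 2 ^ z := (Nat.le_add_right _ _).trans_lt ((Nat.le_add_right _ _).trans_lt ha)
    have hcomb : (Qbar z * (1 + B)) r (Fin.ofNat _ a, i) =
        Qbar z r (Fin.ofNat _ a, i)
          + X ((true, false), j) * Qbar z r (Fin.ofNat _ (a + 2 ^ (j : ℕ)), i)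
          - Qbar z r (Fin.ofNat _ a, j)
          - X ((true, false), i) * Qbar z r (Fin.ofNat _ (a + 2 ^ (i : ℕ)), j) := by
      rw [Matrix.mul_add, Matrix.mul_one, Matrix.add_apply, Matrix.mul_apply]
      simp only [B, if_pos hc, mul_sub, mul_ite, mul_zero, mul_one, Finset.sum_sub_distrib,
        Finset.sum_ite_eq', Finset.mem_univ, if_true, Fin.val_ofNat,
        Nat.mod_eq_of_lt ha']
      ring
    rw [hcomb]
    exact X_sub_X_dvd_Qbar_column_combination hij hai haj ha r

theorem stmt_17_general (z : ℕ) (i j : Fin z) (hij : (i : ℕ) < (j : ℕ)) :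
    -- `ins p c b` inserts the bit `c` at position `p` of `b`;
    -- `del p b` deletes the bit of `b` at position `p`;
    -- `phi b = φ(i,j,b)` deletes bit `j-1` and inserts a `0` at position `i`.
    let ins : ℕ → Bool → ℕ → ℕ := fun p c b =>
      b / 2 ^ p * 2 ^ (p + 1) + (if c then 2 ^ p else 0) + b % 2 ^ p
    let del : ℕ → ℕ → ℕ := fun p b => b / 2 ^ (p + 1) * 2 ^ p + b % 2 ^ p
    let phi : ℕ → ℕ := fun b => ins (i : ℕ) false (del ((j : ℕ) - 1) b)
    let fin2z : ℕ → Fin (2 ^ z) := fun x => ⟨x % 2 ^ z, Nat.mod_lt _ (Nat.two_pow_pos z)⟩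
    let Xv : (Bool × Bool) × Fin z → MvPolynomial ((Bool × Bool) × Fin z) ℤ :=
      MvPolynomial.X
    -- every entry of the modified column `D̄'_{2i}(b)` is divisible by `λ₁⁽ⁱ⁾ − λ₁⁽ʲ⁾`:
    (∀ b < 2 ^ (z - 1), b.testBit ((j : ℕ) - 1) = false →
      ∀ row : Fin (2 ^ z) × Fin z,
        (Xv ((false, false), i) - Xv ((false, false), j)) ∣
          (Qbar z row (fin2z (ins (i : ℕ) false b), i)
            + Xv ((true, false), j) *
                Qbar z row (fin2z (ins (i : ℕ) false (b + 2 ^ ((j : ℕ) - 1))), i)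
            - Qbar z row (fin2z (ins (j : ℕ) false (phi b)), j)
            - Xv ((true, false), i) *
                Qbar z row (fin2z (ins (j : ℕ) false (phi b + 2 ^ (i : ℕ))), j))) ∧
    -- consequently the power `(λ₁⁽ⁱ⁾ − λ₁⁽ʲ⁾)^(2^(z-2))` divides the determinant:
    (Xv ((false, false), i) - Xv ((false, false), j)) ^ (2 ^ (z - 2)) ∣ (Qbar z).det := by
  intro ins del phi fin2z Xv
  have hij' : (i : ℕ) < j := hij
  refine ⟨fun b hb hbit r => ?_, X_sub_X_pow_dvd_det_Qbar hij⟩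
  have hj : (j : ℕ) - 1 + 1 = j := by omega
  have e1 : ins i false (b + 2 ^ ((j : ℕ) - 1)) = Nat.insertBit i false b + 2 ^ (j : ℕ) := by
    show Nat.insertBit _ false _ = _
    rw [← hj, ← Nat.insertBit_add_two_pow_of_le (by omega) hbit, hj]
  have e2 : ins j false (phi b) = Nat.insertBit i false b := by
    have := Nat.insertBit_succ_insertBit_eraseBit (p := i) (by omega) hbit false
    rwa [hj] at this
  have e3 : ins j false (phi b + 2 ^ (i : ℕ)) = Nat.insertBit i false b + 2 ^ (i : ℕ) := by
    rw [← e2]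
    exact Nat.insertBit_add_two_pow_of_lt hij' (Nat.testBit_insertBit_self _ _ _) false
  rw [e1, e2, e3]
  exact X_sub_X_dvd_Qbar_column_combination hij (Nat.testBit_insertBit_self _ _ _)
    ((Nat.testBit_insertBit_of_lt hij' _ _).trans hbit)
    (Nat.insertBit_add_two_pow_add_two_pow_lt hij' j.isLt hb hbit) r

theorem stmt_17 (z : ℕ) (hz : 2 ≤ z) (i j : Fin z) (hij : (i : ℕ) < (j : ℕ)) :
    -- `ins p c b` inserts the bit `c` at position `p` of `b`;
    -- `del p b` deletes the bit of `b` at position `p`;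
    -- `phi b = φ(i,j,b)` deletes bit `j-1` and inserts a `0` at position `i`.
    let ins : ℕ → Bool → ℕ → ℕ := fun p c b =>
      b / 2 ^ p * 2 ^ (p + 1) + (if c then 2 ^ p else 0) + b % 2 ^ p
    let del : ℕ → ℕ → ℕ := fun p b => b / 2 ^ (p + 1) * 2 ^ p + b % 2 ^ p
    let phi : ℕ → ℕ := fun b => ins (i : ℕ) false (del ((j : ℕ) - 1) b)
    let fin2z : ℕ → Fin (2 ^ z) := fun x => ⟨x % 2 ^ z, Nat.mod_lt _ (Nat.two_pow_pos z)⟩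
    let Xv : (Bool × Bool) × Fin z → MvPolynomial ((Bool × Bool) × Fin z) ℤ :=
      MvPolynomial.X
    -- every entry of the modified column `D̄'_{2i}(b)` is divisible by `λ₁⁽ⁱ⁾ − λ₁⁽ʲ⁾`:
    (∀ b < 2 ^ (z - 1), b.testBit ((j : ℕ) - 1) = false →
      ∀ row : Fin (2 ^ z) × Fin z,
        (Xv ((false, false), i) - Xv ((false, false), j)) ∣
          (Qbar z row (fin2z (ins (i : ℕ) false b), i)
            + Xv ((true, false), j) *
                Qbar z row (fin2z (ins (i : ℕ) false (b + 2 ^ ((j : ℕ) - 1))), i)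
            - Qbar z row (fin2z (ins (j : ℕ) false (phi b)), j)
            - Xv ((true, false), i) *
                Qbar z row (fin2z (ins (j : ℕ) false (phi b + 2 ^ (i : ℕ))), j))) ∧
    -- consequently the power `(λ₁⁽ⁱ⁾ − λ₁⁽ʲ⁾)^(2^(z-2))` divides the determinant:
    (Xv ((false, false), i) - Xv ((false, false), j)) ^ (2 ^ (z - 2)) ∣ (Qbar z).det :=
  stmt_17_general z i j hij
end
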